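/- Let (I,(·,·)) be a Cartan datum, let i ∈ I, let r ≥ 2 be an integer, and let S ⊆ I ∖ {i} be a nonempty subset such that (α_j,α_{j'}) = 0 for all distinct j, j' ∈ S and such that a_{ij} = 1 − r for every j ∈ S. Set n − 1 = |S| and L = (n−1)(r−1) + 1, and fix any enumeration j_1, …, j_{n−1} of S. Then the identity Σ_{k=0}^{L} (−1)^k [L ¦ k]_{d_i} · f_i^k · f_{j_1} f_{j_2} ⋯ f_{j_{n−1}} · f_i^{L−k} = 0 holds in U_q^-. -/

import Mathlib

noncomputable section

open Finset

/-- The field `ℚ(q)` of rational functions. -/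
abbrev K : Type := RatFunc ℚ

/-- The variable `q`. -/
def q : K := RatFunc.X

/-- The balanced `q`-integer `[n]_d = (q^{dn} - q^{-dn})/(q^d - q^{-d})`. -/
def qintd (d : ℤ) (n : ℤ) : K := (q ^ (d * n) - q ^ (-(d * n))) / (q ^ d - q ^ (-d))

/-- The `q`-factorial `[m]_d^! = [1]_d ⋯ [m]_d`. -/
def qfactd (d : ℤ) (m : ℕ) : K := ∏ t ∈ Finset.range m, qintd d (t + 1)

/-- The `q`-binomial coefficient `[n ¦ m]_d = [n]_d ⋯ [n-m+1]_d/[m]_d^!`. -/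
def qbinomd (d : ℤ) (n : ℤ) (m : ℕ) : K := (∏ t ∈ Finset.range m, qintd d (n - t)) / qfactd d m

variable {I : Type} [Fintype I] [DecidableEq I]

/-- `d_i = (α_i,α_i)/2`. -/
def dd (form : I → I → ℤ) (i : I) : ℤ := form i i / 2

/-- `a_{ij} = 2(α_i,α_j)/(α_i,α_i)`. -/
def aij (form : I → I → ℤ) (i j : I) : ℤ := 2 * form i j / form i i

/-- The quantum Serre element
`Σ_{k=0}^{1−a_{ij}} (−1)^k [1−a_{ij} ¦ k]_{d_i} f_i^k f_j f_i^{1−a_{ij}−k}`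
in the free algebra. -/
def serre (form : I → I → ℤ) (i j : I) : FreeAlgebra K I :=
  ∑ k ∈ Finset.range ((1 - aij form i j).toNat + 1),
    ((-1 : K) ^ k * qbinomd (dd form i) (1 - aij form i j) k) •
      ((FreeAlgebra.ι K i) ^ k * FreeAlgebra.ι K j *
        (FreeAlgebra.ι K i) ^ ((1 - aij form i j).toNat - k))

/-- The relation imposing the quantum Serre relations. -/
def serreRel (form : I → I → ℤ) : FreeAlgebra K I → FreeAlgebra K I → Prop :=
  fun x y => ∃ i j, i ≠ j ∧ x = serre form i j ∧ y = 0

/-- The negative part `U_q^-` of the quantized enveloping algebra: the quotient of the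
free associative `ℚ(q)`-algebra on the `f_i` by the quantum Serre relations. -/
abbrev Uneg (form : I → I → ℤ) : Type := RingQuot (serreRel form)

/-- The generator `f_i` of `U_q^-`. -/
def fgen (form : I → I → ℤ) (i : I) : Uneg form :=
  RingQuot.mkAlgHom K (serreRel form) (FreeAlgebra.ι K i)

/-!
Write `P_N(u, v) = ∏ (v - c • u)` over `c = q^{d(N-1)}, q^{d(N-3)}, …, q^{-d(N-1)}`. By the Gauss
binomial formula its coefficients are `(-1)^k [N ¦ k]_d`, so the Serre relation of degree `N` for
`x` says that `P_N(L, R)` kills `x`, where `L`, `R` are left and right multiplication by `f`.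

Suppose `x` and `y` satisfy the relations of degrees `p + 1` and `s + 1`, and encode the word
`f^a x f^b y f^c` by the monomial `X₀^a X₁^b X₂^c`. The relation for `x` kills the multiples of
`P_{p+1}(X₀, X₁)`, the one for `y` the multiples of `P_{s+1}(X₁, X₂)`. Every root of
`P_{p+s+1}(X₀, X₂)` is a product of a root of `P_{p+1}` and a root of `P_{s+1}`, which puts
`P_{p+s+1}(X₀, X₂)` in the ideal generated by the other two: divide by `P_{s+1}`, monic in `X₂`, and
observe that the remainder vanishes on the distinct lines `X₁ = c X₀`. Hence `x y` satisfies the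
relation of degree `p + s + 1`, and induction along `f_{j_1} ⋯ f_{j_{n-1}}`, starting from `1`
(degree `1`), gives the theorem.
-/

lemma q_ne_zero : q ≠ 0 := RatFunc.X_ne_zero

lemma intDegree_q_zpow (n : ℤ) : (q ^ n).intDegree = n := by
  obtain ⟨m, rfl | rfl⟩ := Int.eq_nat_or_neg n
  · rw [zpow_natCast, q, ← RatFunc.algebraMap_X, ← map_pow, RatFunc.intDegree_polynomial,
      Polynomial.natDegree_X_pow]
  · rw [zpow_neg, RatFunc.intDegree_inv, zpow_natCast, q, ← RatFunc.algebraMap_X, ← map_pow,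
      RatFunc.intDegree_polynomial, Polynomial.natDegree_X_pow]

lemma q_zpow_injective : Function.Injective (q ^ · : ℤ → K) :=
  fun m n h => by simpa only [intDegree_q_zpow] using congrArg RatFunc.intDegree h

lemma q_zpow_sub_q_zpow_neg_ne_zero {n : ℤ} (hn : n ≠ 0) : q ^ n - q ^ (-n) ≠ 0 :=
  sub_ne_zero.2 fun h => hn (by have := q_zpow_injective h; omega)

lemma qintd_ne_zero {d n : ℤ} (hd : d ≠ 0) (hn : n ≠ 0) : qintd d n ≠ 0 :=
  div_ne_zero (q_zpow_sub_q_zpow_neg_ne_zero (mul_ne_zero hd hn))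
    (q_zpow_sub_q_zpow_neg_ne_zero hd)

lemma qfactd_ne_zero {d : ℤ} (hd : d ≠ 0) (m : ℕ) : qfactd d m ≠ 0 :=
  prod_ne_zero_iff.2 fun _ _ => qintd_ne_zero hd (by positivity)

@[simp] lemma qbinomd_zero_right (d n : ℤ) : qbinomd d n 0 = 1 := by
  simp [qbinomd, qfactd]

lemma qbinomd_one_one {d : ℤ} (hd : d ≠ 0) : qbinomd d 1 1 = 1 := by
  simpa [qbinomd, qfactd] using div_self (qintd_ne_zero hd one_ne_zero)

lemma qbinomd_self_succ (d : ℤ) (M : ℕ) : qbinomd d M (M + 1) = 0 := by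
  rw [qbinomd, prod_eq_zero (self_mem_range_succ M) (by simp [qintd]), zero_div]

lemma qintd_add_one (d n k : ℤ) :
    qintd d (n + 1) = q ^ (-(d * k)) * qintd d (n - k + 1) + q ^ (d * (n + 1 - k)) * qintd d k := by
  simp only [qintd, ← mul_div_assoc, ← add_div, mul_sub, ← zpow_add₀ q_ne_zero]
  ring_nf

lemma qbinomd_succ_succ {d : ℤ} (hd : d ≠ 0) (n : ℤ) (k : ℕ) :
    qbinomd d (n + 1) (k + 1)
      = q ^ (-(d * (k + 1))) * qbinomd d n (k + 1) + q ^ (d * (n - k)) * qbinomd d n k := by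
  have hfact : qfactd d (k + 1) = qfactd d k * qintd d (k + 1) := by
    simp [qfactd, prod_range_succ]
  have hnum : ∏ t ∈ range (k + 1), qintd d (n + 1 - t)
      = qintd d (n + 1) * ∏ t ∈ range k, qintd d (n - t) := by
    rw [prod_range_succ']
    simp only [Nat.cast_add, Nat.cast_one, Nat.cast_zero, sub_zero, add_sub_add_right_eq_sub]
    ring
  have := qfactd_ne_zero hd k
  have := qintd_ne_zero hd (n := k + 1) (by omega)
  rw [qbinomd, qbinomd, qbinomd, hnum, hfact, prod_range_succ, qintd_add_one d n (k + 1),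
    show n - (k + 1) + 1 = n - k by ring, show n + 1 - (k + 1) = n - k by ring]
  field_simp

lemma sum_qbinomd_succ_eq_mul {R : Type*} [CommRing R] [Algebra K R] {d : ℤ} (hd : d ≠ 0)
    (M : ℕ) (u v : R) :
    ∑ k ∈ range (M + 1 + 1), ((-1) ^ k * qbinomd d (M + 1 : ℕ) k) • (u ^ k * v ^ (M + 1 - k))
      = (∑ k ∈ range (M + 1), ((-1) ^ k * qbinomd d M k) • ((q ^ (-d) • u) ^ k * v ^ (M - k)))
        * (v - q ^ (d * M) • u) := by
  have hpow (k : ℕ) : (q ^ (-d) • u) ^ k = q ^ (-(d * k)) • u ^ k := by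
    rw [smul_pow, ← zpow_natCast, ← zpow_mul]
    ring_nf
  have hshift (a : ℕ → K) (ha : a (M + 1) = 0) :
      ∑ k ∈ range (M + 1), a k • (u ^ k * v ^ (M - k) * v)
        = ∑ k ∈ range (M + 1), a (k + 1) • (u ^ (k + 1) * v ^ (M - k)) + a 0 • v ^ (M + 1) := by
    have h := sum_range_succ' (fun k => a k • (u ^ k * v ^ (M + 1 - k))) (M + 1)
    simp only [Nat.add_sub_add_right, pow_zero, one_mul, Nat.sub_zero] at h
    rw [← h, sum_range_succ _ (M + 1), ha, zero_smul, add_zero]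
    refine sum_congr rfl fun k hk => ?_
    rw [mul_assoc, ← pow_succ, Nat.sub_add_comm (Nat.lt_succ_iff.1 (mem_range.1 hk))]
  rw [sum_mul]
  simp only [hpow, smul_mul_assoc, smul_smul, mul_sub, sum_sub_distrib, mul_smul_comm]
  rw [hshift (fun k => (-1) ^ k * qbinomd d M k * q ^ (-(d * k))) (by simp [qbinomd_self_succ]),
    sum_range_succ' _ (M + 1), add_sub_right_comm, ← sum_sub_distrib]
  congr 1
  · refine sum_congr rfl fun k _ => ?_
    rw [mul_right_comm (u ^ k), ← pow_succ, ← sub_smul, Nat.add_sub_add_right, Nat.cast_succ M,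
      qbinomd_succ_succ hd]
    congr 1
    rw [show d * (M - k) = d * M + -(d * k) by ring, zpow_add₀ q_ne_zero]
    push_cast
    ring
  · simp

theorem prod_range_sub_smul_eq_sum {R : Type*} [CommRing R] [Algebra K R] {d : ℤ} (hd : d ≠ 0)
    (M : ℕ) (u v : R) :
    ∏ s ∈ range M, (v - q ^ (d * (M - 1 - 2 * s)) • u)
      = ∑ k ∈ range (M + 1), ((-1) ^ k * qbinomd d M k) • (u ^ k * v ^ (M - k)) := by
  induction M generalizing u with
  | zero => simp
  | succ M ih =>
    rw [sum_qbinomd_succ_eq_mul hd, ← ih, prod_range_succ']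
    congr 1
    · refine prod_congr rfl fun s _ => ?_
      rw [smul_smul, ← zpow_add₀ q_ne_zero]
      push_cast
      ring_nf
    · push_cast
      ring_nf

open Classical in
def qRoots (d : ℤ) (M : ℕ) : Finset K := (range M).image fun s : ℕ => q ^ (d * (M - 1 - 2 * s))

theorem prod_qRoots_sub_smul_eq_sum {R : Type*} [CommRing R] [Algebra K R] {d : ℤ} (hd : d ≠ 0)
    (M : ℕ) (u v : R) :
    ∏ c ∈ qRoots d M, (v - c • u)
      = ∑ k ∈ range (M + 1), ((-1) ^ k * qbinomd d M k) • (u ^ k * v ^ (M - k)) := by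
  classical
  rw [qRoots, prod_image fun s _ t _ h => ?_, prod_range_sub_smul_eq_sum hd]
  have := mul_left_cancel₀ hd (q_zpow_injective h)
  omega

lemma zero_notMem_qRoots (d : ℤ) (M : ℕ) : 0 ∉ qRoots d M := by
  simp [qRoots, zpow_ne_zero, q_ne_zero]

lemma mul_mem_qRoots {d : ℤ} {p s : ℕ} {a b : K} (ha : a ∈ qRoots d (p + 1))
    (hb : b ∈ qRoots d (s + 1)) : a * b ∈ qRoots d (p + s + 1) := by
  classical
  obtain ⟨t, ht, rfl⟩ := mem_image.1 ha
  obtain ⟨u, hu, rfl⟩ := mem_image.1 hb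
  refine mem_image.2 ⟨t + u, by simp only [mem_range] at *; omega, ?_⟩
  rw [← zpow_add₀ q_ne_zero]
  push_cast
  ring_nf

section Polynomials

open Polynomial

theorem prod_X_sub_C_dvd_of_eval_eq_zero {R : Type*} [CommRing R] [IsDomain R] (S : Finset R)
    {p : R[X]} (h : ∀ a ∈ S, p.eval a = 0) : ∏ a ∈ S, (X - C a) ∣ p := by
  rcases eq_or_ne p 0 with rfl | hp
  · exact dvd_zero _
  rw [prod_eq_multiset_prod, Multiset.prod_X_sub_C_dvd_iff_le_roots hp,
    Multiset.le_iff_subset S.nodup]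
  exact fun a ha => (mem_roots hp).2 (h a ha)

theorem exists_eq_mul_add_mul_C_prod {R : Type*} [CommRing R] [IsDomain R] (S : Finset R)
    {B P : R[X][X]} (hB : B.Monic)
    (h : ∀ a ∈ S, B.map (evalRingHom a) ∣ P.map (evalRingHom a)) :
    ∃ Q T : R[X][X], P = Q * B + T * C (∏ a ∈ S, (X - C a)) := by
  have hdvd : C (∏ a ∈ S, (X - C a)) ∣ P %ₘ B := by
    refine C_dvd_iff_dvd_coeff _ _ |>.2 fun n => prod_X_sub_C_dvd_of_eval_eq_zero S fun a ha => ?_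
    have hmod : (P %ₘ B).map (evalRingHom a) = 0 := by
      rw [map_modByMonic _ hB, modByMonic_eq_zero_iff_dvd (hB.map _)]
      exact h a ha
    simpa using congrArg (coeff · n) hmod
  obtain ⟨T, hT⟩ := hdvd
  exact ⟨P /ₘ B, T, by rw [mul_comm (P /ₘ B), mul_comm T, ← hT, add_comm, modByMonic_add_div]⟩

theorem exists_prod_sub_smul_eq {F : Type*} [Field F] {S₁ S₂ S : Finset F} (h0 : 0 ∉ S₁)
    (hS : ∀ a ∈ S₁, ∀ b ∈ S₂, a * b ∈ S) :
    ∃ Q T : F[X][X][X], ∏ c ∈ S, (X - c • C (C X))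
      = Q * ∏ c ∈ S₂, (X - c • C X) + T * C (∏ c ∈ S₁, (X - c • C X)) := by
  classical
  have hA : ∏ c ∈ S₁, (X - c • C X : F[X][X]) = ∏ a ∈ S₁.image (· • X), (X - C a) := by
    rw [prod_image fun c _ c' _ h => smul_left_injective F X_ne_zero h]
    simp [smul_C]
  rw [hA]
  refine exists_eq_mul_add_mul_C_prod _ (monic_prod_of_monic _ _ fun c _ => ?_) fun a ha => ?_
  · rw [smul_C]
    exact monic_X_sub_C _
  obtain ⟨c', hc', rfl⟩ := mem_image.1 ha
  have hc'0 : c' ≠ 0 := ne_of_mem_of_not_mem hc' h0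
  have hB : ∏ c ∈ S₂, (X - C ((c * c') • X : F[X]))
      = ∏ e ∈ S₂.image (· * c'), (X - C (e • X)) :=
    (prod_image (f := fun e => X - C (e • X)) fun c _ c'' _ h => mul_right_cancel₀ hc'0 h).symm
  simp only [smul_C, Polynomial.map_prod, Polynomial.map_sub, map_X, map_C, coe_evalRingHom,
    eval_C, eval_smul, eval_X, smul_smul, hB]
  refine prod_dvd_prod_of_subset _ _ _ fun e he => ?_
  obtain ⟨c, hc, rfl⟩ := mem_image.1 he
  exact mul_comm c' c ▸ hS c' hc' c hc

-- `X₀ = C (C X)`, `X₁ = C X`, `X₂ = X`: in the tower one can divide by polynomials monic in `X₂`.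
def towerToMvPolynomial (R : Type*) [CommSemiring R] : R[X][X][X] →ₐ[R] MvPolynomial (Fin 3) R :=
  eval₂AlgHom (eval₂AlgHom (aeval (MvPolynomial.X 0)) (MvPolynomial.X 1) fun _ => .all _ _)
    (MvPolynomial.X 2) fun _ => .all _ _

lemma towerToMvPolynomial_X (R : Type*) [CommSemiring R] :
    towerToMvPolynomial R X = MvPolynomial.X 2 :=
  eval₂_X _ _

lemma towerToMvPolynomial_C_X (R : Type*) [CommSemiring R] :
    towerToMvPolynomial R (C X) = MvPolynomial.X 1 := by
  simp [towerToMvPolynomial]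

lemma towerToMvPolynomial_C_C_X (R : Type*) [CommSemiring R] :
    towerToMvPolynomial R (C (C X)) = MvPolynomial.X 0 := by
  simp [towerToMvPolynomial]

theorem prod_sub_smul_mem_span {F : Type*} [Field F] {S₁ S₂ S : Finset F} (h0 : 0 ∉ S₁)
    (hS : ∀ a ∈ S₁, ∀ b ∈ S₂, a * b ∈ S) :
    ∏ c ∈ S, (MvPolynomial.X 2 - c • MvPolynomial.X 0 : MvPolynomial (Fin 3) F)
      ∈ Ideal.span {∏ c ∈ S₁, (MvPolynomial.X 1 - c • MvPolynomial.X 0),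
        ∏ c ∈ S₂, (MvPolynomial.X 2 - c • MvPolynomial.X 1)} := by
  obtain ⟨Q, T, h⟩ := exists_prod_sub_smul_eq h0 hS
  refine Ideal.mem_span_pair.2 ⟨towerToMvPolynomial F T, towerToMvPolynomial F Q, ?_⟩
  have := congrArg (towerToMvPolynomial F) h
  simp only [map_add, map_mul, map_prod, map_prod C, map_sub C, map_sub (towerToMvPolynomial F),
    ← smul_C, map_smul, towerToMvPolynomial_X, towerToMvPolynomial_C_X,
    towerToMvPolynomial_C_C_X] at this
  rw [this, add_comm]

end Polynomials

theorem map_mul_eq_zero_of_forall_monomial {σ R M : Type*} [CommSemiring R] [AddCommMonoid M]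
    [Module R M] (Λ : MvPolynomial σ R →ₗ[R] M) {G : MvPolynomial σ R}
    (h : ∀ α, Λ (MvPolynomial.monomial α 1 * G) = 0) (P : MvPolynomial σ R) : Λ (P * G) = 0 := by
  induction P using MvPolynomial.induction_on' with
  | monomial α c =>
    have hsmul : MvPolynomial.monomial α c = c • MvPolynomial.monomial α 1 := by
      rw [MvPolynomial.smul_monomial, smul_eq_mul, mul_one]
    rw [hsmul, smul_mul_assoc, map_smul, h, smul_zero]
  | add P P' hP hP' => rw [add_mul, map_add, hP, hP', add_zero]

section Words

open MvPolynomial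

variable {A : Type*} [Ring A] [Algebra K A]

def IsQSerre (d : ℤ) (f x : A) (N : ℕ) : Prop :=
  ∑ k ∈ range (N + 1), ((-1 : K) ^ k * qbinomd d N k) • (f ^ k * x * f ^ (N - k)) = 0

lemma isQSerre_one {d : ℤ} (hd : d ≠ 0) (f : A) : IsQSerre d f 1 1 := by
  simp [IsQSerre, sum_range_succ, qbinomd_one_one hd]

def wordEval (f x y : A) : MvPolynomial (Fin 3) K →ₗ[K] A :=
  (basisMonomials (Fin 3) K).constr K fun α => f ^ α 0 * x * f ^ α 1 * y * f ^ α 2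

lemma wordEval_monomial (f x y : A) (α : Fin 3 →₀ ℕ) (c : K) :
    wordEval f x y (monomial α c) = c • (f ^ α 0 * x * f ^ α 1 * y * f ^ α 2) := by
  have hbasis : monomial α c = c • basisMonomials (Fin 3) K α := by
    rw [coe_basisMonomials, smul_monomial, smul_eq_mul, mul_one]
  rw [hbasis, map_smul, wordEval, Module.Basis.constr_basis]

lemma wordEval_X_zero_pow_mul_X_two_pow (f x y : A) (k m : ℕ) :
    wordEval f x y (X 0 ^ k * X 2 ^ m) = f ^ k * (x * y) * f ^ m := by
  rw [X_pow_eq_monomial, X_pow_eq_monomial, monomial_mul, wordEval_monomial]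
  simp [mul_assoc]

lemma wordEval_monomial_mul_X_zero_pow_mul_X_one_pow (f x y : A) (α : Fin 3 →₀ ℕ) (k m : ℕ) :
    wordEval f x y (monomial α 1 * (X 0 ^ k * X 1 ^ m))
      = f ^ α 0 * (f ^ k * x * f ^ m) * (f ^ α 1 * y * f ^ α 2) := by
  rw [X_pow_eq_monomial, X_pow_eq_monomial, monomial_mul, monomial_mul, wordEval_monomial]
  simp [pow_add, mul_assoc, (Commute.pow_pow_self f (α 1) m).left_comm]

lemma wordEval_monomial_mul_X_one_pow_mul_X_two_pow (f x y : A) (α : Fin 3 →₀ ℕ) (k m : ℕ) :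
    wordEval f x y (monomial α 1 * (X 1 ^ k * X 2 ^ m))
      = f ^ α 0 * x * f ^ α 1 * (f ^ k * y * f ^ m) * f ^ α 2 := by
  rw [X_pow_eq_monomial, X_pow_eq_monomial, monomial_mul, monomial_mul, wordEval_monomial]
  simp [pow_add, mul_assoc, (Commute.pow_pow_self f (α 2) m).eq]

variable {d : ℤ} {f x : A}

lemma IsQSerre.wordEval_mul_prod_X_one_sub_smul_X_zero (hd : d ≠ 0) {N : ℕ} (hx : IsQSerre d f x N)
    (y : A) (P : MvPolynomial (Fin 3) K) :
    wordEval f x y (P * ∏ c ∈ qRoots d N, (X 1 - c • X 0)) = 0 := by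
  refine map_mul_eq_zero_of_forall_monomial _ (fun α => ?_) P
  rw [← zero_mul (f ^ α 1 * y * f ^ α 2), ← mul_zero (f ^ α 0), ← hx, mul_sum, sum_mul,
    prod_qRoots_sub_smul_eq_sum hd, mul_sum, map_sum]
  refine sum_congr rfl fun k _ => ?_
  rw [mul_smul_comm, map_smul, wordEval_monomial_mul_X_zero_pow_mul_X_one_pow, mul_smul_comm,
    smul_mul_assoc]

lemma IsQSerre.wordEval_mul_prod_X_two_sub_smul_X_one (hd : d ≠ 0) {N : ℕ} {y : A}
    (hy : IsQSerre d f y N) (P : MvPolynomial (Fin 3) K) :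
    wordEval f x y (P * ∏ c ∈ qRoots d N, (X 2 - c • X 1)) = 0 := by
  refine map_mul_eq_zero_of_forall_monomial _ (fun α => ?_) P
  rw [← zero_mul (f ^ α 2), ← mul_zero (f ^ α 0 * x * f ^ α 1), ← hy, mul_sum, sum_mul,
    prod_qRoots_sub_smul_eq_sum hd, mul_sum, map_sum]
  refine sum_congr rfl fun k _ => ?_
  rw [mul_smul_comm, map_smul, wordEval_monomial_mul_X_one_pow_mul_X_two_pow, mul_smul_comm,
    smul_mul_assoc]

theorem IsQSerre.mul (hd : d ≠ 0) {y : A} {p s : ℕ} (hx : IsQSerre d f x (p + 1))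
    (hy : IsQSerre d f y (s + 1)) : IsQSerre d f (x * y) (p + s + 1) := by
  obtain ⟨T, Q, h⟩ := Ideal.mem_span_pair.1 <|
    prod_sub_smul_mem_span (zero_notMem_qRoots d (p + 1)) fun _ ha _ hb => mul_mem_qRoots ha hb
  have key := congrArg (wordEval f x y) h
  rw [map_add, hx.wordEval_mul_prod_X_one_sub_smul_X_zero hd,
    hy.wordEval_mul_prod_X_two_sub_smul_X_one hd, zero_add, prod_qRoots_sub_smul_eq_sum hd,
    map_sum] at key
  simpa [IsQSerre, wordEval_X_zero_pow_mul_X_two_pow] using key.symm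

theorem isQSerre_list_prod {ι : Type*} (hd : d ≠ 0) (g : ι → A) {r : ℕ} (l : List ι)
    (h : ∀ j ∈ l, IsQSerre d f (g j) (r + 1)) :
    IsQSerre d f (l.map g).prod (l.length * r + 1) := by
  induction l with
  | nil => simpa using isQSerre_one hd f
  | cons j l ih =>
    rw [List.map_cons, List.prod_cons, List.length_cons,
      show (l.length + 1) * r + 1 = r + l.length * r + 1 by ring]
    exact (h j List.mem_cons_self).mul hd (ih fun j hj => h j (List.mem_cons_of_mem _ hj))

end Words

lemma isQSerre_fgen {I : Type} (form : I → I → ℤ) {i j : I} (hij : i ≠ j) {r : ℕ}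
    (h : aij form i j = 1 - r) : IsQSerre (dd form i) (fgen form i) (fgen form j) r := by
  have hrel := RingQuot.mkAlgHom_rel K
    (show serreRel form (serre form i j) 0 from ⟨i, j, hij, rfl, rfl⟩)
  have hr : 1 - aij form i j = r := by omega
  simpa [serre, hr, IsQSerre, fgen] using hrel

theorem stmt16_general {I : Type} [DecidableEq I]
    (form : I → I → ℤ)
    (hdiag_pos : ∀ i, 0 < form i i) (hdiag_even : ∀ i, 2 ∣ form i i)
    (i : I) (r : ℕ) (hr : 2 ≤ r)
    (S : Finset I) (hiS : i ∉ S)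
    (haij : ∀ j ∈ S, aij form i j = 1 - (r : ℤ))
    (l : List I) (hlnd : l.Nodup) (hlS : l.toFinset = S) :
    ∑ k ∈ Finset.range (S.card * (r - 1) + 1 + 1),
      ((-1 : K) ^ k * qbinomd (dd form i) ((S.card * (r - 1) + 1 : ℕ) : ℤ) k) •
        ((fgen form i) ^ k * (l.map (fgen form)).prod *
          (fgen form i) ^ (S.card * (r - 1) + 1 - k)) = 0 := by
  have hd : dd form i ≠ 0 := by
    have := hdiag_pos i
    obtain ⟨c, hc⟩ := hdiag_even i
    rw [dd, hc]
    omega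
  obtain ⟨r, rfl⟩ : ∃ r', r = r' + 1 := ⟨r - 1, by omega⟩
  have hmem {j} (hj : j ∈ l) : j ∈ S := hlS ▸ List.mem_toFinset.2 hj
  have hserre := isQSerre_list_prod hd (fgen form) l fun j hj =>
    isQSerre_fgen form (ne_of_mem_of_not_mem (hmem hj) hiS).symm (haij j (hmem hj))
  rwa [← hlS, List.toFinset_card_of_nodup hlnd, Nat.add_sub_cancel]

/-- let `i ∈ I`, `r ≥ 2`, and let `S ⊆ I ∖ {i}` be nonempty with
`(α_j,α_{j'}) = 0` for distinct `j,j' ∈ S` and `a_{ij} = 1−r` for all `j ∈ S`.  With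
`n−1 = |S|`, `L = (n−1)(r−1)+1`, and any enumeration `j_1,…,j_{n−1}` of `S` (given by a
duplicate-free list `l`), one has
`Σ_{k=0}^{L} (−1)^k [L ¦ k]_{d_i} f_i^k f_{j_1}⋯f_{j_{n−1}} f_i^{L−k} = 0` in `U_q^-`. -/
theorem stmt16 {I : Type} [Fintype I] [DecidableEq I] [Nonempty I]
    (form : I → I → ℤ)
    (hsymm : ∀ i j, form i j = form j i)
    (hdiag_pos : ∀ i, 0 < form i i) (hdiag_even : ∀ i, 2 ∣ form i i)
    (hoff : ∀ i j, i ≠ j → 2 * form i j ≤ 0 ∧ form i i ∣ 2 * form i j)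
    (i : I) (r : ℕ) (hr : 2 ≤ r)
    (S : Finset I) (hSne : S.Nonempty) (hiS : i ∉ S)
    (horth : ∀ j ∈ S, ∀ j' ∈ S, j ≠ j' → form j j' = 0)
    (haij : ∀ j ∈ S, aij form i j = 1 - (r : ℤ))
    (l : List I) (hlnd : l.Nodup) (hlS : l.toFinset = S) :
    ∑ k ∈ Finset.range (S.card * (r - 1) + 1 + 1),
      ((-1 : K) ^ k * qbinomd (dd form i) ((S.card * (r - 1) + 1 : ℕ) : ℤ) k) •
        ((fgen form i) ^ k * (l.map (fgen form)).prod *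
          (fgen form i) ^ (S.card * (r - 1) + 1 - k)) = 0 :=
  stmt16_general form hdiag_pos hdiag_even i r hr S hiS haij l hlnd hlS
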